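/- arXiv:2605.11975 — 4 statements merged into one kernel-verified Lean document; each statement's English description precedes it below -/
import Mathlib

section
/- Let V* be the fixed point of B[V](x) = max{h(x), min{g(x), γ ∫ V dκ(x,·)}} in the setting where g(x) = -M on T, g(x) > 0 off T, h(x) = M on F, h(x) = -M off F, and γ ∈ (0,1). Then the function W(x) := -V*(x)/M satisfies: W(x) ≤ 1 for x ∈ T; W(x) ≤ 0 for x ∈ F; and W(x) ≤ γ ∫ W(x') κ(x, dx') whenever x ∉ T ∪ F and W(x) > 0. -/
/-! Where `V*` is negative it lies below `g > 0`, so in `V* = max h (min g (γ ∫ V* dκ))` the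
minimum cannot be `g`: it is the continuation value, and `V* ≥ γ ∫ V* dκ`. Negating and dividing
by `M` turns this into the decrease condition for `W`. -/

open MeasureTheory ProbabilityTheory

lemma le_max_min_of_max_min_lt {a b c : ℝ} (h : max a (min b c) < b) :
    c ≤ max a (min b c) := by
  rcases le_total c b with hcb | hbc
  · rw [min_eq_right hcb]
    exact le_max_right a c
  · rw [min_eq_left hbc] at h
    exact absurd h (not_lt.mpr (le_max_right a b))

lemma neg_div_le_mul_integral_neg_div {X : Type*} [MeasurableSpace X] {μ : Measure X}
    {f : X → ℝ} {a γ M : ℝ} (hM : 0 ≤ M) (h : γ * ∫ y, f y ∂μ ≤ a) :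
    -a / M ≤ γ * ∫ y, -f y / M ∂μ := by
  rw [integral_div, integral_neg, ← mul_div_assoc]
  exact div_le_div_of_nonneg_right (by linarith) hM

theorem rapc_certificate_properties_general
    {X : Type*} [MeasurableSpace X] (κ : Kernel X X)
    (γ : ℝ)
    (M : ℝ) (hM : 0 < M)
    (T F : Set X)
    (g h : X → ℝ)
    (hgT' : ∀ x ∉ T, 0 < g x)
    (hhF : ∀ x ∈ F, h x = M)
    (Vs : X → ℝ) (hVbd : ∀ x, |Vs x| ≤ M)
    (hfix : ∀ x, Vs x = max (h x) (min (g x) (γ * ∫ x', Vs x' ∂(κ x)))) :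
    (∀ x ∈ T, -Vs x / M ≤ 1) ∧
    (∀ x ∈ F, -Vs x / M ≤ 0) ∧
    (∀ x, x ∉ T ∪ F → 0 < -Vs x / M →
      -Vs x / M ≤ γ * ∫ x', -Vs x' / M ∂(κ x)) := by
  refine ⟨fun x _ => ?_, fun x hxF => ?_, fun x hx hW => ?_⟩
  · exact (div_le_one hM).mpr (by linarith [(abs_le.mp (hVbd x)).1])
  · have hMV : M ≤ Vs x := hhF x hxF ▸ hfix x ▸ le_max_left _ _
    exact div_nonpos_of_nonpos_of_nonneg (by linarith) hM.le
  · have hxT : x ∉ T := fun hxT => hx (Set.mem_union_left F hxT)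
    have hVneg : Vs x < 0 := by linarith [(div_pos_iff_of_pos_right hM).mp hW]
    have hVg : max (h x) (min (g x) (γ * ∫ x', Vs x' ∂(κ x))) < g x :=
      hfix x ▸ hVneg.trans (hgT' x hxT)
    exact neg_div_le_mul_integral_neg_div hM.le (hfix x ▸ le_max_min_of_max_min_lt hVg)

/-- Let `V*` be the bounded fixed point of the clamped Bellman operator (with the
reach-avoid choice of `g` and `h`: `g = -M` on `T`, `g > 0` off `T`, `h = M` on `F`,
`h = -M` off `F`), `|V*| ≤ M`. Then `W := -V*/M` satisfies `W ≤ 1` on `T`, `W ≤ 0`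
on `F`, and `W x ≤ γ ∫ W dκ(x,·)` whenever `x ∉ T ∪ F` and `W x > 0`. -/
theorem rapc_certificate_properties
    {X : Type*} [MeasurableSpace X] (κ : Kernel X X) [IsMarkovKernel κ]
    (γ : ℝ) (hγ0 : 0 < γ) (hγ1 : γ < 1)
    (M : ℝ) (hM : 0 < M)
    (T F : Set X) (hTF : Disjoint T F)
    (g h : X → ℝ)
    (hgT : ∀ x ∈ T, g x = -M) (hgT' : ∀ x ∉ T, 0 < g x)
    (hhF : ∀ x ∈ F, h x = M) (hhF' : ∀ x ∉ F, h x = -M)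
    (Vs : X → ℝ) (hVmeas : Measurable Vs) (hVbd : ∀ x, |Vs x| ≤ M)
    (hfix : ∀ x, Vs x = max (h x) (min (g x) (γ * ∫ x', Vs x' ∂(κ x)))) :
    (∀ x ∈ T, -Vs x / M ≤ 1) ∧
    (∀ x ∈ F, -Vs x / M ≤ 0) ∧
    (∀ x, x ∉ T ∪ F → 0 < -Vs x / M →
      -Vs x / M ≤ γ * ∫ x', -Vs x' / M ∂(κ x)) :=
  rapc_certificate_properties_general κ γ M hM T F g h hgT' hhF Vs hVbd hfix
end

section
/- Let (x_t) be a Markov chain on a countable state space with kernel κ, and let T, F be disjoint sets. Suppose v : X → ℝ is bounded and satisfies v(x) ≤ 1 for x ∈ T, v(x) ≤ 0 for x ∈ F, and v(x) ≤ γ Σ_{x'} κ(x,x') v(x') for all x ∉ T ∪ F, where γ ∈ (0,1). Then for every start state x₀, the reach-avoid probability satisfies P(reach T before F | x₀) ≥ v(x₀). -/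
open scoped ENNReal

open Classical in
/-- `raProbN κ T F n x`: probability of reaching `T` within `n` steps while
avoiding `F`, for the Markov chain with transition kernel `κ` started at `x`. -/
noncomputable def raProbN {X : Type*} (κ : X → PMF X) (T F : Set X) : ℕ → X → ℝ≥0∞
  | 0, x => if x ∈ T then 1 else 0
  | n + 1, x =>
      if x ∈ T then 1
      else if x ∈ F then 0
      else ∑' x', κ x x' * raProbN κ T F n x'

/-- The reach-avoid probability: reaching `T` at a finite time before visiting `F`. -/
noncomputable def raProb {X : Type*} (κ : X → PMF X) (T F : Set X) (x : X) : ℝ≥0∞ :=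
  ⨆ n, raProbN κ T F n x


lemma raProbN_le_one {X : Type*} (κ : X → PMF X) (T F : Set X) :
    ∀ n x, raProbN κ T F n x ≤ 1 := by
  intro n
  induction n with
  | zero =>
    intro x
    rw [raProbN]
    split <;> simp
  | succ n ih =>
    intro x
    rw [raProbN]
    split
    · exact le_rfl
    · split
      · exact zero_le_one
      · calc ∑' x', κ x x' * raProbN κ T F n x'
              ≤ ∑' x', κ x x' * 1 :=
            ENNReal.tsum_le_tsum fun x' => mul_le_mul_right (ih x') _
          _ = 1 := by simp [(κ x).tsum_coe]

/-- A bounded certificate `v` with `v ≤ 1` on `T`, `v ≤ 0` on `F`, and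
`v(x) ≤ γ Σ_{x'} κ(x,x') v(x')` off `T ∪ F` (with `γ ∈ (0,1)`) lower-bounds the
reach-avoid probability at every start state. -/
theorem certificate_le_raProb {X : Type*} [Countable X]
    (κ : X → PMF X) (T F : Set X) (hTF : Disjoint T F)
    (γ : ℝ) (hγ0 : 0 < γ) (hγ1 : γ < 1)
    (v : X → ℝ) (hvbd : ∃ C, ∀ x, |v x| ≤ C)
    (hvT : ∀ x ∈ T, v x ≤ 1)
    (hvF : ∀ x ∈ F, v x ≤ 0)
    (hvrec : ∀ x, x ∉ T ∪ F → v x ≤ γ * ∑' x', (κ x x').toReal * v x') :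
    ∀ x₀, v x₀ ≤ (raProb κ T F x₀).toReal := by
  intro x₀
  obtain ⟨C, hC⟩ := hvbd
  have hC0 : 0 ≤ C := (abs_nonneg _).trans (hC x₀)
  have hγ0' : (0:ℝ) ≤ γ := hγ0.le
  have key : ∀ n x, v x ≤ (raProbN κ T F n x).toReal + γ ^ n * C := by
    intro n
    induction n with
    | zero =>
      intro x
      by_cases hx : x ∈ T
      · have : raProbN κ T F 0 x = 1 := by rw [raProbN]; simp [hx]
        rw [this]
        simpa using le_add_of_le_of_nonneg (hvT x hx) (by simpa using hC0)
      · have : raProbN κ T F 0 x = 0 := by rw [raProbN]; simp [hx]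
        rw [this]
        have := (abs_le.mp (hC x)).2
        simpa using this
    | succ n ih =>
      intro x
      have hpow : 0 ≤ γ ^ (n+1) * C := mul_nonneg (pow_nonneg hγ0' _) hC0
      by_cases hxT : x ∈ T
      · have h1 : raProbN κ T F (n+1) x = 1 := by rw [raProbN]; simp [hxT]
        rw [h1]
        simpa using le_add_of_le_of_nonneg (hvT x hxT) hpow
      by_cases hxF : x ∈ F
      · have h1 : raProbN κ T F (n+1) x = 0 := by rw [raProbN]; simp [hxT, hxF]
        rw [h1]
        simpa using le_add_of_le_of_nonneg (hvF x hxF) hpow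
      · have hrec := hvrec x (by simp [hxT, hxF])
        have hfs : Summable (fun x' => (κ x x').toReal) :=
          ENNReal.summable_toReal (by simp [(κ x).tsum_coe])
        have hraR : ∀ x', (raProbN κ T F n x').toReal ≤ 1 := by
          intro x'
          have := ENNReal.toReal_mono ENNReal.one_ne_top (raProbN_le_one κ T F n x')
          simpa using this
        have hsum1 : Summable (fun x' => (κ x x').toReal * v x') := by
          refine Summable.of_abs ?_
          refine Summable.of_nonneg_of_le (fun x' => abs_nonneg _)
            (fun x' => ?_) (hfs.mul_right C)
          rw [abs_mul, abs_of_nonneg ENNReal.toReal_nonneg]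
          exact mul_le_mul_of_nonneg_left (hC x') ENNReal.toReal_nonneg
        have hsumra : Summable (fun x' => (κ x x').toReal * (raProbN κ T F n x').toReal) := by
          refine Summable.of_nonneg_of_le
            (fun x' => mul_nonneg ENNReal.toReal_nonneg ENNReal.toReal_nonneg)
            (fun x' => ?_) (hfs.mul_right 1)
          exact mul_le_mul_of_nonneg_left (hraR x') ENNReal.toReal_nonneg
        have hsum2 : Summable
            (fun x' => (κ x x').toReal * ((raProbN κ T F n x').toReal + γ ^ n * C)) := by
          have := hsumra.add (hfs.mul_right (γ ^ n * C))
          refine this.congr fun x' => ?_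
          ring
        have hle : ∀ x', (κ x x').toReal * v x'
            ≤ (κ x x').toReal * ((raProbN κ T F n x').toReal + γ ^ n * C) :=
          fun x' => mul_le_mul_of_nonneg_left (ih x') ENNReal.toReal_nonneg
        have htsum_le : ∑' x', (κ x x').toReal * v x'
            ≤ ∑' x', (κ x x').toReal * ((raProbN κ T F n x').toReal + γ ^ n * C) :=
          Summable.tsum_le_tsum hle hsum1 hsum2
        have hone : ∑' x', (κ x x').toReal = 1 := by
          rw [← ENNReal.tsum_toReal_eq (fun x' => PMF.apply_ne_top (κ x) x')]
          simp [(κ x).tsum_coe]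
        have hsplit : ∑' x', (κ x x').toReal * ((raProbN κ T F n x').toReal + γ ^ n * C)
            = (∑' x', (κ x x').toReal * (raProbN κ T F n x').toReal) + γ ^ n * C := by
          have h1 : (fun x' => (κ x x').toReal * ((raProbN κ T F n x').toReal + γ ^ n * C))
              = fun x' => (κ x x').toReal * (raProbN κ T F n x').toReal
                + (κ x x').toReal * (γ ^ n * C) := by
            funext x'; ring
          rw [h1, Summable.tsum_add hsumra (hfs.mul_right _), tsum_mul_right, hone, one_mul]
        set S : ℝ := ∑' x', (κ x x').toReal * (raProbN κ T F n x').toReal with hS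
        have hS0 : 0 ≤ S :=
          tsum_nonneg fun x' => mul_nonneg ENNReal.toReal_nonneg ENNReal.toReal_nonneg
        have hSeq : S = (raProbN κ T F (n+1) x).toReal := by
          have hnt : ∀ x', κ x x' * raProbN κ T F n x' ≠ ∞ :=
            fun x' => ENNReal.mul_ne_top (PMF.apply_ne_top (κ x) x')
              (lt_of_le_of_lt (raProbN_le_one κ T F n x') ENNReal.one_lt_top).ne
          have : raProbN κ T F (n+1) x = ∑' x', κ x x' * raProbN κ T F n x' := by
            rw [raProbN]; simp [hxT, hxF]
          rw [this, ENNReal.tsum_toReal_eq hnt]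
          exact tsum_congr fun x' => (ENNReal.toReal_mul).symm
        calc v x ≤ γ * ∑' x', (κ x x').toReal * v x' := hrec
          _ ≤ γ * (S + γ ^ n * C) := by
              rw [← hsplit]; exact mul_le_mul_of_nonneg_left htsum_le hγ0'
          _ = γ * S + γ ^ (n+1) * C := by ring
          _ ≤ S + γ ^ (n+1) * C := by nlinarith
          _ = (raProbN κ T F (n+1) x).toReal + γ ^ (n+1) * C := by rw [hSeq]
  have hra_top : raProb κ T F x₀ ≠ ∞ := by
    refine ne_top_of_le_ne_top ENNReal.one_ne_top (iSup_le fun n => raProbN_le_one κ T F n x₀)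
  have hmono : ∀ n, (raProbN κ T F n x₀).toReal ≤ (raProb κ T F x₀).toReal :=
    fun n => ENNReal.toReal_mono hra_top (le_iSup (fun n => raProbN κ T F n x₀) n)
  have hbd : ∀ n, v x₀ ≤ (raProb κ T F x₀).toReal + γ ^ n * C :=
    fun n => (key n x₀).trans (add_le_add_left (hmono n) _)
  have htend : Filter.Tendsto (fun n => (raProb κ T F x₀).toReal + γ ^ n * C)
      Filter.atTop (nhds ((raProb κ T F x₀).toReal + 0 * C)) := by
    exact Filter.Tendsto.const_add _
      ((tendsto_pow_atTop_nhds_zero_of_lt_one hγ0' hγ1).mul_const C)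
  have := ge_of_tendsto' htend hbd
  simpa using this
end

section
/- Let B₁ and B₂ be two operators on bounded functions given by B_i[V](x) = max{h_i(x), min{g_i(x), γ ∫ V dκ(x,·)}} with the same kernel κ and discount γ ∈ (0,1), and let V₁*, V₂* be their respective fixed points. Then ‖V₁* - V₂*‖_∞ ≤ (1/(1-γ)) · max{‖h₁ - h₂‖_∞, ‖g₁ - g₂‖_∞}. -/
/-!
Each clamped Bellman operator `V ↦ max h (min g (γ ∫ V dκ))` is a `γ`-contraction in the
sup norm, because `max` and `min` are `1`-Lipschitz in each argument and integration against a
Markov kernel does not increase the sup norm. Comparing the two operators at the same function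
costs at most `max ‖h₁ - h₂‖ ‖g₁ - g₂‖`, so `D = ‖V₁* - V₂*‖_∞` satisfies
`D ≤ max ‖h₁ - h₂‖ ‖g₁ - g₂‖ + γ D`.
-/

open MeasureTheory ProbabilityTheory

lemma abs_max_min_sub_max_min_le {α : Type*} [AddCommGroup α] [LinearOrder α]
    [IsOrderedAddMonoid α] (h₁ g₁ a₁ h₂ g₂ a₂ : α) :
    |max h₁ (min g₁ a₁) - max h₂ (min g₂ a₂)| ≤
      max (max |h₁ - h₂| |g₁ - g₂|) |a₁ - a₂| :=
  calc |max h₁ (min g₁ a₁) - max h₂ (min g₂ a₂)|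
      ≤ max |h₁ - h₂| |min g₁ a₁ - min g₂ a₂| := abs_max_sub_max_le_max _ _ _ _
    _ ≤ max |h₁ - h₂| (max |g₁ - g₂| |a₁ - a₂|) := by
        gcongr; exact abs_min_sub_min_le_max _ _ _ _
    _ = max (max |h₁ - h₂| |g₁ - g₂|) |a₁ - a₂| := (max_assoc _ _ _).symm

lemma abs_integral_sub_integral_le_of_abs_sub_le {Ω : Type*} [MeasurableSpace Ω]
    {μ : Measure Ω} [IsProbabilityMeasure μ] {f₁ f₂ : Ω → ℝ} {M : ℝ}
    (hf₁ : Integrable f₁ μ) (hf₂ : Integrable f₂ μ) (hM : ∀ ω, |f₁ ω - f₂ ω| ≤ M) :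
    |∫ ω, f₁ ω ∂μ - ∫ ω, f₂ ω ∂μ| ≤ M := by
  rw [← integral_sub hf₁ hf₂]
  simpa using norm_integral_le_of_norm_le_const (μ := μ) (f := fun ω => f₁ ω - f₂ ω)
    (ae_of_all _ hM)

lemma le_div_one_sub_of_forall_le_add_mul {X : Type*} {u : X → ℝ} {c γ : ℝ}
    (hu : BddAbove (Set.range u)) (hγ : γ < 1)
    (h : ∀ M, (∀ y, u y ≤ M) → ∀ x, u x ≤ c + γ * M) (x : X) :
    u x ≤ c / (1 - γ) := by
  have : Nonempty X := ⟨x⟩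
  have hsup : ⨆ y, u y ≤ c + γ * ⨆ y, u y := ciSup_le (h _ (le_ciSup hu))
  calc u x ≤ ⨆ y, u y := le_ciSup hu x
    _ ≤ c / (1 - γ) := by rw [le_div_iff₀ (by linarith)]; linarith

/-- If `V₁*`, `V₂*` are the fixed points of two clamped Bellman operators with the
same Markov kernel `κ` and discount `γ ∈ (0,1)`, but data `(g₁,h₁)` and `(g₂,h₂)`,
then `‖V₁* - V₂*‖_∞ ≤ (1/(1-γ)) · max{‖h₁-h₂‖_∞, ‖g₁-g₂‖_∞}` (stated via
pointwise bounds). -/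
theorem bellman_fixed_point_perturbation
    {X : Type*} [MeasurableSpace X] (κ : Kernel X X) [IsMarkovKernel κ]
    (γ : ℝ) (hγ0 : 0 < γ) (hγ1 : γ < 1)
    (g₁ h₁ g₂ h₂ : X → ℝ)
    (Dh Dg : ℝ)
    (hDh : ∀ x, |h₁ x - h₂ x| ≤ Dh) (hDg : ∀ x, |g₁ x - g₂ x| ≤ Dg)
    (V₁ V₂ : X → ℝ) (hm₁ : Measurable V₁) (hm₂ : Measurable V₂)
    (hb₁ : ∃ C, ∀ x, |V₁ x| ≤ C) (hb₂ : ∃ C, ∀ x, |V₂ x| ≤ C)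
    (hfix₁ : ∀ x, V₁ x = max (h₁ x) (min (g₁ x) (γ * ∫ x', V₁ x' ∂(κ x))))
    (hfix₂ : ∀ x, V₂ x = max (h₂ x) (min (g₂ x) (γ * ∫ x', V₂ x' ∂(κ x)))) :
    ∀ x, |V₁ x - V₂ x| ≤ (1 / (1 - γ)) * max Dh Dg := by
  obtain ⟨C₁, hC₁⟩ := hb₁
  obtain ⟨C₂, hC₂⟩ := hb₂
  have hbdd : BddAbove (Set.range fun x => |V₁ x - V₂ x|) :=
    ⟨C₁ + C₂, by
      rintro _ ⟨x, rfl⟩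
      exact (abs_sub _ _).trans (add_le_add (hC₁ x) (hC₂ x))⟩
  intro x
  rw [one_div_mul_eq_div]
  refine le_div_one_sub_of_forall_le_add_mul hbdd hγ1 (fun M hM y => ?_) x
  have hγM : 0 ≤ γ * M := mul_nonneg hγ0.le ((abs_nonneg _).trans (hM y))
  have hint : |γ * ∫ x', V₁ x' ∂(κ y) - γ * ∫ x', V₂ x' ∂(κ y)| ≤ γ * M := by
    rw [← mul_sub, abs_mul, abs_of_pos hγ0]
    gcongr
    exact abs_integral_sub_integral_le_of_abs_sub_le
      (.of_bound hm₁.aestronglyMeasurable C₁ (ae_of_all _ hC₁))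
      (.of_bound hm₂.aestronglyMeasurable C₂ (ae_of_all _ hC₂)) hM
  calc |V₁ y - V₂ y| ≤ max (max |h₁ y - h₂ y| |g₁ y - g₂ y|)
        |γ * ∫ x', V₁ x' ∂(κ y) - γ * ∫ x', V₂ x' ∂(κ y)| := by
        rw [hfix₁ y, hfix₂ y]; exact abs_max_min_sub_max_min_le _ _ _ _ _ _
    _ ≤ max (max Dh Dg) (γ * M) := by gcongr; exacts [hDh y, hDg y]
    _ ≤ max Dh Dg + γ * M :=
        max_le_add_of_nonneg ((abs_nonneg _).trans ((hDh y).trans (le_max_left _ _))) hγM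
end

section
/- In a finite-dimensional real inner product space, given vectors g_r and g_c with ⟨g_r, g_c⟩ < 0 and both nonzero, define the symmetric projections g̃_r = g_r - (⟨g_r, g_c⟩/⟨g_c, g_c⟩) g_c and g̃_c = g_c - (⟨g_c, g_r⟩/⟨g_r, g_r⟩) g_r. Then ⟨g̃_r, g_c⟩ = 0, ⟨g̃_c, g_r⟩ = 0, and moreover ⟨g̃_r + g̃_c, g_r⟩ ≥ 0 and ⟨g̃_r + g̃_c, g_c⟩ ≥ 0. -/
open scoped RealInnerProductSpace

/-- PCGrad-style symmetric projection: for nonzero vectors `g_r, g_c` with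
`⟪g_r, g_c⟫ < 0`, the projected directions are orthogonal to the other objective's
gradient, and the combined direction `g̃_r + g̃_c` is non-conflicting with both
`g_r` and `g_c`. -/
theorem symmetric_projection_nonconflicting
    {E : Type*} [NormedAddCommGroup E] [InnerProductSpace ℝ E]
    [FiniteDimensional ℝ E]
    (gr gc : E) (hgr : gr ≠ 0) (hgc : gc ≠ 0) (hneg : ⟪gr, gc⟫ < 0) :
    ⟪gr - (⟪gr, gc⟫ / ⟪gc, gc⟫) • gc, gc⟫ = 0 ∧
    ⟪gc - (⟪gc, gr⟫ / ⟪gr, gr⟫) • gr, gr⟫ = 0 ∧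
    0 ≤ ⟪(gr - (⟪gr, gc⟫ / ⟪gc, gc⟫) • gc) + (gc - (⟪gc, gr⟫ / ⟪gr, gr⟫) • gr), gr⟫ ∧
    0 ≤ ⟪(gr - (⟪gr, gc⟫ / ⟪gc, gc⟫) • gc) + (gc - (⟪gc, gr⟫ / ⟪gr, gr⟫) • gr), gc⟫ := by
  have hnr : (0:ℝ) < ‖gr‖ := norm_pos_iff.mpr hgr
  have hnc : (0:ℝ) < ‖gc‖ := norm_pos_iff.mpr hgc
  have hrr : (0:ℝ) < ⟪gr, gr⟫ := by rw [real_inner_self_eq_norm_sq]; positivity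
  have hcc : (0:ℝ) < ⟪gc, gc⟫ := by rw [real_inner_self_eq_norm_sq]; positivity
  have hcs : ⟪gr, gc⟫ * ⟪gr, gc⟫ ≤ ⟪gr, gr⟫ * ⟪gc, gc⟫ := real_inner_mul_inner_self_le gr gc
  have hsym : ⟪gc, gr⟫ = ⟪gr, gc⟫ := real_inner_comm gr gc
  have h1 : ⟪gr - (⟪gr, gc⟫ / ⟪gc, gc⟫) • gc, gc⟫ = 0 := by
    rw [inner_sub_left, real_inner_smul_left]
    field_simp
    ring
  have h2 : ⟪gc - (⟪gc, gr⟫ / ⟪gr, gr⟫) • gr, gr⟫ = 0 := by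
    rw [inner_sub_left, real_inner_smul_left]
    field_simp
    ring
  refine ⟨h1, h2, ?_, ?_⟩
  · rw [inner_add_left, h2, add_zero, inner_sub_left, real_inner_smul_left,
      hsym]
    rw [sub_nonneg, div_mul_eq_mul_div, div_le_iff₀ hcc]
    nlinarith
  · rw [inner_add_left, h1, zero_add, inner_sub_left, real_inner_smul_left, hsym]
    rw [sub_nonneg, div_mul_eq_mul_div, div_le_iff₀ hrr]
    nlinarith
end
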